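/- Assume q is odd and let R(y) be the 9×9 commutator matrix defined in the context, for y = (y_0, ..., y_8) ∈ F^9. Then R(y) has rank ≤ 2 if and only if y_0 = y_1 = y_2 = y_3 = y_4 = 0, and R(y) has rank 0 if and only if y_0 = y_1 = ... = y_7 = 0. -/

import Mathlib

/-!
For each of `y₀, …, y₄` some `3×3` minor of `R(y)` equals `yᵢ³` times one of `±1, ±2, 4`,
a unit in odd characteristic, so rank `≤ 2` forces them to vanish. Conversely, once they vanish,
`R(y)` is the `3×3` block on the indices `5, 6, 7` padded by zeros, and that block is
skew-symmetric of odd size, hence singular. Rank `0` is read off the same way from `1×1` minors.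
-/

/-- The `9×9` commutator matrix `R(y)` of the Lie centralizer of the nilpotent element
`C_{[2,1,1]}(0)`. -/
def R211 (F : Type*) [Field F] (y : Fin 9 → F) : Matrix (Fin 9) (Fin 9) F :=
  !![0, 0, y 4, 0, 0, 0, y 1, y 0, -2 * y 0;
     0, 0, 0, y 4, 0, y 0, 0, -y 1, -2 * y 1;
     -y 4, 0, 0, 0, 0, -y 3, 0, -y 2, 2 * y 2;
     0, -y 4, 0, 0, 0, 0, -y 2, y 3, 2 * y 3;
     0, 0, 0, 0, 0, 0, 0, 0, 0;
     0, -y 0, y 3, 0, 0, 0, -y 7, 2 * y 5, 0;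
     -y 1, 0, 0, y 2, 0, y 7, 0, -2 * y 6, 0;
     -y 0, y 1, y 2, -y 3, 0, -2 * y 5, 2 * y 6, 0, 0;
     2 * y 0, 2 * y 1, -2 * y 2, -2 * y 3, 0, 0, 0, 0, 0]

theorem FiniteField.two_ne_zero_of_odd_card {F : Type*} [Field F] [Fintype F]
    (h : Odd (Fintype.card F)) : (2 : F) ≠ 0 :=
  Ring.two_ne_zero fun hF =>
    Nat.not_odd_iff_even.2 (Nat.even_iff.2 (FiniteField.even_card_iff_char_two.1 hF)) h

namespace Matrix

variable {K : Type*} [Field K] {m n : Type*} [Fintype n]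

theorem le_rank_of_det_submatrix_ne_zero (A : Matrix m n K) {k : ℕ} (r : Fin k → m)
    (c : Fin k → n) (h : (A.submatrix r c).det ≠ 0) : k ≤ A.rank := by
  simpa [rank_of_det_ne_zero h] using rank_submatrix_le A r c

theorem eq_zero_of_rank_lt_of_det_submatrix_eq {A : Matrix m n K} {k : ℕ} (hA : A.rank < k)
    {r : Fin k → m} {c : Fin k → n} {a x : K} (ha : a ≠ 0)
    (hdet : (A.submatrix r c).det = a * x ^ k) : x = 0 := by
  by_contra hx
  exact hA.not_ge (A.le_rank_of_det_submatrix_ne_zero r c (by simp [hdet, ha, hx]))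

theorem rank_lt_card_of_det_eq_zero [DecidableEq n] {A : Matrix n n K} (h : A.det = 0) :
    A.rank < Fintype.card n := by
  refine A.rank_le_card_width.lt_of_ne fun hA => ?_
  have hrange : LinearMap.range A.mulVecLin = ⊤ :=
    Submodule.eq_top_of_finrank_eq (by simpa [rank] using hA)
  have hunit : IsUnit A := mulVec_surjective_iff_isUnit.1 (LinearMap.range_eq_top.1 hrange)
  exact ((isUnit_iff_isUnit_det A).1 hunit).ne_zero h

end Matrix

open Matrix

section

variable {F : Type*} [Field F] (y : Fin 9 → F)

theorem R211_coords_eq_zero_of_rank_le_two (htwo : (2 : F) ≠ 0) (hy : (R211 F y).rank ≤ 2) :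
    y 0 = 0 ∧ y 1 = 0 ∧ y 2 = 0 ∧ y 3 = 0 ∧ y 4 = 0 := by
  have hlt : (R211 F y).rank < 3 := Nat.lt_succ_of_le hy
  refine ⟨eq_zero_of_rank_lt_of_det_submatrix_eq hlt (r := ![0, 1, 8]) (c := ![7, 5, 0]) htwo ?_,
    eq_zero_of_rank_lt_of_det_submatrix_eq hlt (r := ![0, 1, 8]) (c := ![6, 7, 1])
      (neg_ne_zero.2 htwo) ?_,
    eq_zero_of_rank_lt_of_det_submatrix_eq hlt (r := ![2, 3, 8]) (c := ![8, 6, 2])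
      (mul_ne_zero htwo htwo) ?_,
    eq_zero_of_rank_lt_of_det_submatrix_eq hlt (r := ![2, 3, 8]) (c := ![5, 7, 3]) htwo ?_,
    eq_zero_of_rank_lt_of_det_submatrix_eq hlt (r := ![0, 1, 2]) (c := ![2, 3, 0])
      (neg_ne_zero.2 one_ne_zero) ?_⟩
  all_goals
    rw [det_fin_three]
    simp only [R211, submatrix_apply, of_apply, cons_val', cons_val, cons_val_zero, cons_val_one,
      cons_val_fin_one]
    ring

theorem det_R211_submatrix_five_six_seven :
    ((R211 F y).submatrix ![5, 6, 7] ![5, 6, 7]).det = 0 := by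
  rw [det_fin_three]
  simp only [R211, submatrix_apply, of_apply, cons_val', cons_val, cons_val_zero, cons_val_one,
    cons_val_fin_one]
  ring

theorem R211_eq_mul_submatrix_five_six_seven_mul
    (h0 : y 0 = 0) (h1 : y 1 = 0) (h2 : y 2 = 0) (h3 : y 3 = 0) (h4 : y 4 = 0) :
    R211 F y = (1 : Matrix (Fin 9) (Fin 9) F).submatrix id ![5, 6, 7] *
      (R211 F y).submatrix ![5, 6, 7] ![5, 6, 7] *
      (1 : Matrix (Fin 9) (Fin 9) F).submatrix ![5, 6, 7] id := by
  ext i j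
  simp only [mul_apply, Fin.sum_univ_three, submatrix_apply, one_apply, id]
  fin_cases i <;> fin_cases j <;> simp [R211, h0, h1, h2, h3, h4]

theorem rank_R211_le_two (h0 : y 0 = 0) (h1 : y 1 = 0) (h2 : y 2 = 0) (h3 : y 3 = 0)
    (h4 : y 4 = 0) : (R211 F y).rank ≤ 2 := by
  rw [R211_eq_mul_submatrix_five_six_seven_mul y h0 h1 h2 h3 h4]
  calc _ ≤ ((R211 F y).submatrix ![5, 6, 7] ![5, 6, 7]).rank :=
        (rank_mul_le_left _ _).trans (rank_mul_le_right _ _)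
    _ ≤ 2 := by
        simpa using
          Nat.le_of_lt_succ (rank_lt_card_of_det_eq_zero (det_R211_submatrix_five_six_seven y))

theorem rank_R211_le_two_iff (htwo : (2 : F) ≠ 0) :
    (R211 F y).rank ≤ 2 ↔ y 0 = 0 ∧ y 1 = 0 ∧ y 2 = 0 ∧ y 3 = 0 ∧ y 4 = 0 :=
  ⟨R211_coords_eq_zero_of_rank_le_two y htwo, fun ⟨h0, h1, h2, h3, h4⟩ =>
    rank_R211_le_two y h0 h1 h2 h3 h4⟩

theorem rank_R211_eq_zero_iff (htwo : (2 : F) ≠ 0) :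
    (R211 F y).rank = 0 ↔
      y 0 = 0 ∧ y 1 = 0 ∧ y 2 = 0 ∧ y 3 = 0 ∧ y 4 = 0 ∧ y 5 = 0 ∧ y 6 = 0 ∧ y 7 = 0 := by
  constructor
  · intro hy
    obtain ⟨h0, h1, h2, h3, h4⟩ := R211_coords_eq_zero_of_rank_le_two y htwo (by omega)
    have hlt : (R211 F y).rank < 1 := by omega
    refine ⟨h0, h1, h2, h3, h4,
      eq_zero_of_rank_lt_of_det_submatrix_eq hlt (r := ![5]) (c := ![7]) htwo ?_,
      eq_zero_of_rank_lt_of_det_submatrix_eq hlt (r := ![7]) (c := ![6]) htwo ?_,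
      eq_zero_of_rank_lt_of_det_submatrix_eq hlt (r := ![6]) (c := ![5]) one_ne_zero ?_⟩
    all_goals
      rw [det_fin_one]
      simp [R211]
  · rintro ⟨h0, h1, h2, h3, h4, h5, h6, h7⟩
    have hzero : R211 F y = 0 := by
      ext i j
      fin_cases i <;> fin_cases j <;> simp [R211, h0, h1, h2, h3, h4, h5, h6, h7]
    rw [hzero, rank_zero]

end

/-- Assume `q` is odd.  Then `R(y)` has rank `≤ 2` iff `y₀ = ⋯ = y₄ = 0`,
and rank `0` iff `y₀ = ⋯ = y₇ = 0`. -/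
theorem stmt_15 (F : Type*) [Field F] [Fintype F] (q : ℕ) (hq : Fintype.card F = q)
    (hodd : Odd q) (y : Fin 9 → F) :
    ((R211 F y).rank ≤ 2 ↔ (y 0 = 0 ∧ y 1 = 0 ∧ y 2 = 0 ∧ y 3 = 0 ∧ y 4 = 0)) ∧
    ((R211 F y).rank = 0 ↔
      (y 0 = 0 ∧ y 1 = 0 ∧ y 2 = 0 ∧ y 3 = 0 ∧ y 4 = 0 ∧ y 5 = 0 ∧ y 6 = 0 ∧ y 7 = 0)) := by
  have htwo : (2 : F) ≠ 0 := FiniteField.two_ne_zero_of_odd_card (hq ▸ hodd)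
  exact ⟨rank_R211_le_two_iff y htwo, rank_R211_eq_zero_iff y htwo⟩
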